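/- In an HEG, repeatedly extracting a coalition C_t from the remaining agents such that U(C_t) ≥ α·max{U(D) : D ⊆ remaining agents, |D| ≤ κ}, until no agents remain, yields a partition that is α-approximate core stable. -/
import Mathlib


open Finset

noncomputable def jointU {N S : Type*} [Fintype S] (e : N → S → NNReal) (C : Finset N) : ℝ :=
  ∑ s, ((C.sup fun i => e i s : NNReal) : ℝ)

/-- repeatedly extracting from the remaining agents a coalition whose
joint utility is at least `α` times the maximum joint utility achievable (with size
at most `κ`) among the remaining agents yields an `α`-approximate core stable
partition. -/
theorem greedy_extraction_approx_core_stable {N S : Type*} [DecidableEq N] [Fintype N]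
    [Fintype S] (e : N → S → NNReal) (κ : ℕ) (α : ℝ) (hα0 : 0 < α) (hα1 : α ≤ 1)
    (T : ℕ) (Cs : Fin T → Finset N)
    (hne : ∀ t, (Cs t).Nonempty)
    (hκ : ∀ t, (Cs t).card ≤ κ)
    (hdisj : ∀ t t', t ≠ t' → Disjoint (Cs t) (Cs t'))
    (hcover : (Finset.univ : Finset (Fin T)).biUnion Cs = (Finset.univ : Finset N))
    -- greedy property: `Cs t` is an `α`-approximate best coalition among the agents
    -- remaining after the first `t` extractions
    (hgreedy : ∀ t : Fin T, ∀ D : Finset N,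
      D ⊆ Finset.univ \ (Finset.univ.filter fun t' => t' < t).biUnion Cs →
      D.card ≤ κ → α * jointU e D ≤ jointU e (Cs t))
    (P : N → Finset N) (hP : ∀ t, ∀ i ∈ Cs t, P i = Cs t) :
    ¬ ∃ D : Finset N, D.Nonempty ∧ D.card ≤ κ ∧
      ∀ i ∈ D, jointU e (P i) < α * jointU e D := by
  rintro ⟨D, hDne, hDcard, hblock⟩
  -- indices t whose coalition meets D
  set Ts : Finset (Fin T) := Finset.univ.filter (fun t => (D ∩ Cs t).Nonempty) with hTs
  have hTsne : Ts.Nonempty := by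
    obtain ⟨i, hi⟩ := hDne
    have : i ∈ (Finset.univ : Finset (Fin T)).biUnion Cs := by rw [hcover]; exact mem_univ i
    obtain ⟨t, -, hit⟩ := mem_biUnion.mp this
    exact ⟨t, by simp [hTs, Finset.Nonempty]; exact ⟨i, hi, hit⟩⟩
  set t := Ts.min' hTsne with ht
  have htmem : t ∈ Ts := Ts.min'_mem hTsne
  obtain ⟨i, hi⟩ := (mem_filter.mp htmem).2
  obtain ⟨hiD, hit⟩ := mem_inter.mp hi
  have hDsub : D ⊆ Finset.univ \ (Finset.univ.filter fun t' => t' < t).biUnion Cs := by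
    intro j hj
    rw [mem_sdiff]
    refine ⟨mem_univ j, fun hcon => ?_⟩
    obtain ⟨t', ht', hjt'⟩ := mem_biUnion.mp hcon
    have ht'lt : t' < t := (mem_filter.mp ht').2
    have : t' ∈ Ts := mem_filter.mpr ⟨mem_univ t', ⟨j, mem_inter.mpr ⟨hj, hjt'⟩⟩⟩
    exact absurd (Ts.min'_le t' this) (not_le.mpr ht'lt)
  have h1 : α * jointU e D ≤ jointU e (Cs t) := hgreedy t D hDsub hDcard
  have h2 : jointU e (P i) < α * jointU e D := hblock i hiD
  rw [hP t i hit] at h2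
  linarith
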